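/- Assume ψ is convex and let u be a global solution of the first-order gradient system (DS-1). Then t ↦ ‖u′(t)‖ = ‖∇ψ(u(t))‖ is nonincreasing on [0, ∞) and lim_{t→∞} ‖u′(t)‖ = inf_{z ∈ H} ‖∇ψ(z)‖. -/

import Mathlib

/-!
Along the flow, `d/dt ‖∇ψ(u)‖² = -2 ⟪D(∇ψ)(u) ∇ψ(u), ∇ψ(u)⟫ ≤ 0`, because the derivative of the
gradient of a convex function is positive semidefinite (it is the second derivative of `ψ` along
lines, whose first derivative is monotone). So `‖u'‖` decreases to some `l`. Then the energy
`ψ(u t)` drops at rate at least `l²`, whereas the support inequality at any `z` bounds the drop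
over `[T, T + t]` by a constant plus `t ‖∇ψ(z)‖ ‖u'(T)‖`, as `u` moves at speed at most `‖u'(T)‖`
after time `T`. Letting `t → ∞` and then `T → ∞` gives `l² ≤ ‖∇ψ(z)‖ l`, i.e. `l ≤ ‖∇ψ(z)‖`.
-/

open Filter Set Topology InnerProductSpace
open scoped Gradient RealInnerProductSpace

theorem AntitoneOn.exists_tendsto_atTop {f : ℝ → ℝ} {a : ℝ} (hf : AntitoneOn f (Ici a))
    (hb : BddBelow (f '' Ici a)) :
    ∃ l, Tendsto f atTop (𝓝 l) ∧ ∀ t ∈ Ici a, l ≤ f t := by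
  set g : ℝ → ℝ := fun t => f (max t a)
  have hg : Antitone g := fun s t hst =>
    hf (le_max_right s a) (le_max_right t a) (max_le_max_right a hst)
  have hgb : BddBelow (range g) :=
    hb.mono (range_subset_iff.2 fun t => mem_image_of_mem f (le_max_right t a))
  have hfg : g =ᶠ[atTop] f := by
    filter_upwards [eventually_ge_atTop a] with t ht
    simp only [g, max_eq_left ht]
  refine ⟨⨅ t, g t, (tendsto_atTop_ciInf hg hgb).congr' hfg, fun t ht => ?_⟩
  simpa [g, max_eq_left (show a ≤ t from ht)] using ciInf_le hgb t

theorem le_of_forall_nonneg_mul_le_add {a b C : ℝ} (h : ∀ t ≥ 0, t * a ≤ C + t * b) :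
    a ≤ b := by
  by_contra! hba
  obtain ⟨t, ht0, htC⟩ := ((eventually_ge_atTop 0).and
    ((tendsto_id.atTop_mul_const (sub_pos.2 hba)).eventually_gt_atTop C)).exists
  have := h t ht0
  simp only [id] at htC
  linarith

theorem ConvexOn.comp_add_smul {E : Type*} [AddCommGroup E] [Module ℝ E] {f : E → ℝ}
    (hf : ConvexOn ℝ univ f) (x v : E) :
    ConvexOn ℝ univ fun s : ℝ => f (x + s • v) := by
  have hline : (fun s : ℝ => f (x + s • v)) = f ∘ AffineMap.lineMap x (x + v) := by
    funext s
    simp [AffineMap.lineMap_apply, add_comm]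
  simpa [hline] using hf.comp_affineMap (AffineMap.lineMap x (x + v))

theorem DifferentiableAt.hasDerivAt_comp_add_smul {E F : Type*} [NormedAddCommGroup E]
    [NormedSpace ℝ E] [NormedAddCommGroup F] [NormedSpace ℝ F] {φ : E → F} {x v : E}
    {s : ℝ} (hφ : DifferentiableAt ℝ φ (x + s • v)) :
    HasDerivAt (fun r : ℝ => φ (x + r • v)) (fderiv ℝ φ (x + s • v) v) s :=
  hφ.hasFDerivAt.comp_hasDerivAt s (by simpa using ((hasDerivAt_id s).smul_const v).const_add x)

section

variable {H : Type*} [NormedAddCommGroup H] [InnerProductSpace ℝ H] [CompleteSpace H]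

theorem ContDiff.gradient {f : H → ℝ} {m n : WithTop ℕ∞} (hf : ContDiff ℝ n f)
    (hmn : m + 1 ≤ n) :
    ContDiff ℝ m (∇ f) :=
  (toDual ℝ H).symm.contDiff.comp (hf.fderiv_right hmn)

theorem ConvexOn.add_inner_gradient_le {f : H → ℝ} (hf : ConvexOn ℝ univ f)
    (hfd : Differentiable ℝ f) (x y : H) : f x + ⟪∇ f x, y - x⟫ ≤ f y := by
  have hd : HasDerivAt (fun s : ℝ => f (x + s • (y - x))) ⟪∇ f x, y - x⟫ 0 := by
    simpa [inner_gradient_left] using (hfd _).hasDerivAt_comp_add_smul (v := y - x) (s := 0)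
  have := (hf.comp_add_smul x (y - x)).le_slope_of_hasDerivAt (mem_univ 0) (mem_univ 1) one_pos hd
  rw [slope_def_field] at this
  simp only [one_smul, zero_smul, add_zero, sub_zero, div_one, add_sub_cancel] at this
  linarith

theorem ConvexOn.inner_fderiv_gradient_self_nonneg {f : H → ℝ} (hf : ConvexOn ℝ univ f)
    (hfd : Differentiable ℝ f) {x : H} (hgd : DifferentiableAt ℝ (∇ f) x) (v : H) :
    0 ≤ ⟪fderiv ℝ (∇ f) x v, v⟫ := by
  have hderiv : deriv (fun s : ℝ => f (x + s • v)) = fun s => ⟪∇ f (x + s • v), v⟫ := by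
    funext s
    simpa [inner_gradient_left] using ((hfd _).hasDerivAt_comp_add_smul (v := v) (s := s)).deriv
  have hmono : Monotone fun s : ℝ => ⟪∇ f (x + s • v), v⟫ := by
    rw [← hderiv, ← monotoneOn_univ]
    exact (hf.comp_add_smul x v).monotoneOn_deriv fun s _ =>
      (hfd _).hasDerivAt_comp_add_smul.differentiableAt
  have hg :
      HasDerivAt (fun s : ℝ => ⟪∇ f (x + s • v), v⟫) ⟪fderiv ℝ (∇ f) x v, v⟫ 0 := by
    have h := (show DifferentiableAt ℝ (∇ f) (x + (0:ℝ) • v) by simpa using hgd)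
      |>.hasDerivAt_comp_add_smul.inner ℝ (hasDerivAt_const 0 v)
    simpa using h
  exact hg.deriv ▸ hmono.deriv_nonneg

def IsGradientFlow (ψ : H → ℝ) (u : ℝ → H) : Prop :=
  ∀ t ∈ Ici (0 : ℝ), HasDerivWithinAt u (-∇ ψ (u t)) (Ici 0) t

namespace IsGradientFlow

variable {ψ : H → ℝ} {u : ℝ → H}

theorem continuousOn (hu : IsGradientFlow ψ u) : ContinuousOn u (Ici 0) :=
  fun t ht => (hu t ht).continuousWithinAt

theorem hasDerivAt (hu : IsGradientFlow ψ u) {t : ℝ} (ht : 0 < t) :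
    HasDerivAt u (-∇ ψ (u t)) t :=
  (hu t ht.le).hasDerivAt (Ici_mem_nhds ht)

theorem hasDerivAt_comp (hu : IsGradientFlow ψ u) (hψ : Differentiable ℝ ψ) {t : ℝ}
    (ht : 0 < t) :
    HasDerivAt (fun s => ψ (u s)) (-‖∇ ψ (u t)‖ ^ 2) t := by
  have h := (hψ (u t)).hasFDerivAt.comp_hasDerivAt t (hu.hasDerivAt ht)
  rwa [← inner_gradient_left, inner_neg_right, real_inner_self_eq_norm_sq] at h

theorem antitoneOn_norm_gradient (hu : IsGradientFlow ψ u) (hconv : ConvexOn ℝ univ ψ)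
    (hψ : Differentiable ℝ ψ) (hg : Differentiable ℝ (∇ ψ)) :
    AntitoneOn (fun t => ‖∇ ψ (u t)‖) (Ici 0) := by
  have hsq : AntitoneOn (fun t => ‖∇ ψ (u t)‖ ^ 2) (Ici 0) := by
    have hd : ∀ t > 0, HasDerivAt (fun s => ‖∇ ψ (u s)‖ ^ 2)
        (2 * ⟪∇ ψ (u t), fderiv ℝ (∇ ψ) (u t) (-∇ ψ (u t))⟫) t := fun t ht =>
      ((hg (u t)).hasFDerivAt.comp_hasDerivAt t (hu.hasDerivAt ht)).norm_sq
    refine antitoneOn_of_deriv_nonpos (convex_Ici 0)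
      ((hg.continuous.comp_continuousOn hu.continuousOn).norm.pow 2) ?_ ?_ <;>
      rw [interior_Ici]
    · exact fun t ht => (hd t ht).differentiableAt.differentiableWithinAt
    · intro t ht
      have hpsd := hconv.inner_fderiv_gradient_self_nonneg hψ (hg (u t)) (∇ ψ (u t))
      rw [(hd t ht).deriv, map_neg, inner_neg_right, real_inner_comm]
      linarith
  exact fun a ha b hb hab =>
    (pow_le_pow_iff_left₀ (norm_nonneg _) (norm_nonneg _) two_ne_zero).1 (hsq ha hb hab)

theorem antitoneOn_add_mul (hu : IsGradientFlow ψ u) (hψ : Differentiable ℝ ψ) {c : ℝ}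
    (hc : ∀ t ∈ Ici (0 : ℝ), c ≤ ‖∇ ψ (u t)‖ ^ 2) :
    AntitoneOn (fun t => ψ (u t) + c * t) (Ici 0) := by
  have hd : ∀ t > 0, HasDerivAt (fun s => ψ (u s) + c * s) (-‖∇ ψ (u t)‖ ^ 2 + c) t :=
    fun t ht => by
      simpa only [mul_one] using
        (hu.hasDerivAt_comp hψ ht).fun_add ((hasDerivAt_id' t).const_mul c)
  refine antitoneOn_of_deriv_nonpos (convex_Ici 0)
    ((hψ.continuous.comp_continuousOn hu.continuousOn).add
      (continuousOn_const.mul continuousOn_id))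
    ?_ ?_ <;> rw [interior_Ici]
  · exact fun t ht => (hd t ht).differentiableAt.differentiableWithinAt
  · intro t ht
    rw [(hd t ht).deriv]
    linarith [hc t (mem_Ici_of_Ioi ht)]

theorem norm_sub_le_mul (hu : IsGradientFlow ψ u)
    (hanti : AntitoneOn (fun t => ‖∇ ψ (u t)‖) (Ici 0)) {T t : ℝ} (hT : 0 ≤ T) (ht : 0 ≤ t) :
    ‖u (T + t) - u T‖ ≤ ‖∇ ψ (u T)‖ * t := by
  have hsub : Icc T (T + t) ⊆ Ici 0 := fun s hs => hT.trans hs.1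
  have hTt : T ≤ T + t := le_add_of_nonneg_right ht
  have h := (convex_Icc T (T + t)).norm_image_sub_le_of_norm_hasDerivWithin_le
    (fun s hs => (hu s (hsub hs)).mono hsub)
    (fun s hs => by simpa only [norm_neg] using hanti hT (hsub hs) hs.1)
    (left_mem_Icc.2 hTt) (right_mem_Icc.2 hTt)
  rwa [add_sub_cancel_left, Real.norm_of_nonneg ht] at h

theorem le_norm_gradient_mul (hu : IsGradientFlow ψ u) (hconv : ConvexOn ℝ univ ψ)
    (hψ : Differentiable ℝ ψ) (hanti : AntitoneOn (fun t => ‖∇ ψ (u t)‖) (Ici 0)) {c : ℝ}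
    (hc : ∀ t ∈ Ici (0 : ℝ), c ≤ ‖∇ ψ (u t)‖ ^ 2) (z : H) {T : ℝ} (hT : 0 ≤ T) :
    c ≤ ‖∇ ψ z‖ * ‖∇ ψ (u T)‖ := by
  refine le_of_forall_nonneg_mul_le_add (C := ψ (u T) - ψ z + ‖∇ ψ z‖ * ‖u T - z‖)
    fun t ht => ?_
  have hdecay : ψ (u (T + t)) + c * (T + t) ≤ ψ (u T) + c * T :=
    hu.antitoneOn_add_mul hψ hc hT (hT.trans (le_add_of_nonneg_right ht))
      (le_add_of_nonneg_right ht)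
  have hsupport := hconv.add_inner_gradient_le hψ z (u (T + t))
  have hcs := neg_le_of_abs_le (abs_real_inner_le_norm (∇ ψ z) (u (T + t) - z))
  have hdist : ‖u (T + t) - z‖ ≤ ‖u T - z‖ + ‖∇ ψ (u T)‖ * t := by
    calc ‖u (T + t) - z‖ = ‖(u (T + t) - u T) + (u T - z)‖ := by abel_nf
    _ ≤ ‖u (T + t) - u T‖ + ‖u T - z‖ := norm_add_le _ _
    _ ≤ ‖∇ ψ (u T)‖ * t + ‖u T - z‖ := by gcongr; exact hu.norm_sub_le_mul hanti hT ht
    _ = ‖u T - z‖ + ‖∇ ψ (u T)‖ * t := add_comm _ _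
  linarith [mul_le_mul_of_nonneg_left hdist (norm_nonneg (∇ ψ z))]

theorem tendsto_norm_gradient (hu : IsGradientFlow ψ u) (hconv : ConvexOn ℝ univ ψ)
    (hψ : Differentiable ℝ ψ) (hg : Differentiable ℝ (∇ ψ)) :
    Tendsto (fun t => ‖∇ ψ (u t)‖) atTop (𝓝 (⨅ z, ‖∇ ψ z‖)) := by
  have hanti := hu.antitoneOn_norm_gradient hconv hψ hg
  obtain ⟨l, hlim, hle⟩ := hanti.exists_tendsto_atTop ⟨0, by
    rintro _ ⟨t, -, rfl⟩; exact norm_nonneg _⟩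
  have hl0 : 0 ≤ l := ge_of_tendsto' hlim fun t => norm_nonneg _
  have hbdd : BddBelow (range fun z => ‖∇ ψ z‖) :=
    ⟨0, by rintro _ ⟨z, rfl⟩; exact norm_nonneg _⟩
  suffices l = ⨅ z, ‖∇ ψ z‖ from this ▸ hlim
  refine le_antisymm (le_ciInf fun z => ?_) (ge_of_tendsto' hlim fun t => ciInf_le hbdd _)
  have hprod : l ^ 2 ≤ ‖∇ ψ z‖ * l := by
    refine le_of_tendsto_of_tendsto tendsto_const_nhds (hlim.const_mul _) ?_
    filter_upwards [eventually_ge_atTop 0] with T hT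
    exact hu.le_norm_gradient_mul hconv hψ hanti
      (fun t ht => pow_le_pow_left₀ hl0 (hle t ht) 2) z hT
  nlinarith [norm_nonneg (∇ ψ z)]

end IsGradientFlow

end

/-- Proposition 3 (iii): if `ψ` is convex and `u` is a global solution of `u' = -∇ψ(u)`,
then `t ↦ ‖u'(t)‖ = ‖∇ψ(u t)‖` is nonincreasing on `[0, ∞)` and
`lim_{t→∞} ‖u'(t)‖ = inf_{z ∈ H} ‖∇ψ(z)‖`. -/
theorem stmt_9 {H : Type*} [NormedAddCommGroup H] [InnerProductSpace ℝ H] [CompleteSpace H]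
    (ψ : H → ℝ) (hψ : ContDiff ℝ 2 ψ) (hconv : ConvexOn ℝ univ ψ)
    (u u' : ℝ → H)
    (hu : ∀ t ∈ Ici (0:ℝ), HasDerivWithinAt u (u' t) (Ici 0) t)
    (hode : ∀ t ∈ Ici (0:ℝ), u' t = -(gradient ψ (u t))) :
    (∀ t ≥ (0:ℝ), ‖u' t‖ = ‖gradient ψ (u t)‖) ∧
      AntitoneOn (fun t => ‖u' t‖) (Ici 0) ∧
      Tendsto (fun t => ‖u' t‖) atTop (nhds (⨅ z : H, ‖gradient ψ z‖)) := by
  have hflow : IsGradientFlow ψ u := fun t ht => hode t ht ▸ hu t ht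
  have hnorm : ∀ t ≥ (0:ℝ), ‖u' t‖ = ‖∇ ψ (u t)‖ := fun t ht => by
    rw [hode t ht, norm_neg]
  have hψd : Differentiable ℝ ψ := hψ.differentiable (by norm_num)
  have hgd : Differentiable ℝ (∇ ψ) :=
    (hψ.gradient (m := 1) le_rfl).differentiable one_ne_zero
  refine ⟨hnorm,
    (hflow.antitoneOn_norm_gradient hconv hψd hgd).congr fun t ht => (hnorm t ht).symm,
    (hflow.tendsto_norm_gradient hconv hψd hgd).congr' ?_⟩
  filter_upwards [eventually_ge_atTop 0] with t ht
  exact (hnorm t ht).symm
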